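/- arXiv:2410.04271 — 8 statements merged into one kernel-verified Lean document; each statement's English description precedes it below -/
import Mathlib

section
/- For every ℓ ≥ 1 there exist maps F, G : (Fin ℓ → ℝ) → (Fin (3ℓ) → ℝ) such that for all binary vectors a, b : Fin ℓ → ℝ: (i) F a and G b are binary vectors; (ii) ∑_t (F a) t = ℓ and ∑_t (G b) t = ℓ (each padded vector has exactly ℓ ones); (iii) ⟨F a, G b⟩ = ⟨a, b⟩; and consequently (iv) ⟨F a, G b⟩ / (‖F a‖ · ‖G b‖) = ⟨a, b⟩ / ℓ. -/
/-
Pad `a` to `a ++ (1 - a) ++ 0` and `b` to `b ++ 0 ++ (1 - b)`. Each padded vector contains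
`∑ a + (ℓ - ∑ a) = ℓ` ones, and the two paddings meet only in the first block, where they
reproduce `⟨a, b⟩`. A binary vector with `ℓ` ones has norm `√ℓ`, so the cosine similarity of the
padded pair is `⟨a, b⟩ / ℓ`.
-/

open Finset

/-- The Euclidean norm of a vector indexed by a finite type. -/
noncomputable def euclNorm {ι : Type*} [Fintype ι] (v : ι → ℝ) : ℝ :=
  Real.sqrt (∑ t, (v t) ^ 2)

def IsBinary {ι : Type*} (v : ι → ℝ) : Prop :=
  ∀ t, v t = 0 ∨ v t = 1

namespace IsBinary

variable {ι κ : Type*} {v w : ι → ℝ}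

lemma zero : IsBinary (0 : ι → ℝ) := fun _ => Or.inl rfl

lemma one_sub (hv : IsBinary v) : IsBinary (1 - v) := fun t => by
  rcases hv t with h | h <;> simp [h]

lemma comp (hv : IsBinary v) (f : κ → ι) : IsBinary (v ∘ f) := fun t => hv (f t)

lemma append {m n : ℕ} {u : Fin m → ℝ} {v : Fin n → ℝ} (hu : IsBinary u) (hv : IsBinary v) :
    IsBinary (Fin.append u v) :=
  Fin.addCases (fun i => by simpa using hu i) (fun j => by simpa using hv j)

lemma sq_eq (hv : IsBinary v) (t : ι) : v t ^ 2 = v t := by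
  rcases hv t with h | h <;> simp [h]

lemma sum_nonneg [Fintype ι] (hv : IsBinary v) : 0 ≤ ∑ t, v t :=
  Finset.sum_nonneg fun t _ => by rcases hv t with h | h <;> simp [h]

lemma euclNorm_eq [Fintype ι] (hv : IsBinary v) : euclNorm v = √(∑ t, v t) := by
  simp only [euclNorm, hv.sq_eq]

lemma div_euclNorm_mul_euclNorm [Fintype ι] (hv : IsBinary v) (hw : IsBinary w) {n : ℝ}
    (hsv : ∑ t, v t = n) (hsw : ∑ t, w t = n) (x : ℝ) :
    x / (euclNorm v * euclNorm w) = x / n := by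
  have hn : 0 ≤ n := hsv ▸ hv.sum_nonneg
  rw [hv.euclNorm_eq, hw.euclNorm_eq, hsv, hsw, Real.mul_self_sqrt hn]

end IsBinary

lemma Fin.sum_append_mul_append {m n : ℕ} (u u' : Fin m → ℝ) (v v' : Fin n → ℝ) :
    ∑ t, Fin.append u v t * Fin.append u' v' t = ∑ t, u t * u' t + ∑ t, v t * v' t := by
  simp [Fin.sum_univ_add]

lemma three_mul_eq_add_add (ℓ : ℕ) : 3 * ℓ = ℓ + ℓ + ℓ := by ring

section Padding

variable {ℓ : ℕ}

noncomputable def padOnesThenZeros (a : Fin ℓ → ℝ) : Fin (3 * ℓ) → ℝ :=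
  Fin.append (Fin.append a (1 - a)) 0 ∘ Fin.cast (three_mul_eq_add_add ℓ)

noncomputable def padZerosThenOnes (b : Fin ℓ → ℝ) : Fin (3 * ℓ) → ℝ :=
  Fin.append (Fin.append b 0) (1 - b) ∘ Fin.cast (three_mul_eq_add_add ℓ)

lemma isBinary_padOnesThenZeros {a : Fin ℓ → ℝ} (ha : IsBinary a) :
    IsBinary (padOnesThenZeros a) :=
  ((ha.append ha.one_sub).append IsBinary.zero).comp _

lemma isBinary_padZerosThenOnes {b : Fin ℓ → ℝ} (hb : IsBinary b) :
    IsBinary (padZerosThenOnes b) :=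
  ((hb.append IsBinary.zero).append hb.one_sub).comp _

lemma sum_padOnesThenZeros (a : Fin ℓ → ℝ) : ∑ t, padOnesThenZeros a t = ℓ := by
  simp only [padOnesThenZeros, Function.comp_apply, Fin.sum_congr', Fin.sum_univ_add,
    Fin.append_left, Fin.append_right]
  simp

lemma sum_padZerosThenOnes (b : Fin ℓ → ℝ) : ∑ t, padZerosThenOnes b t = ℓ := by
  simp only [padZerosThenOnes, Function.comp_apply, Fin.sum_congr', Fin.sum_univ_add,
    Fin.append_left, Fin.append_right]
  simp

lemma inner_padOnesThenZeros_padZerosThenOnes (a b : Fin ℓ → ℝ) :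
    ∑ t, padOnesThenZeros a t * padZerosThenOnes b t = ∑ t, a t * b t := by
  simp only [padOnesThenZeros, padZerosThenOnes, Function.comp_apply]
  rw [Fin.sum_congr' fun t => Fin.append (Fin.append a (1 - a)) 0 t *
    Fin.append (Fin.append b 0) (1 - b) t, Fin.sum_append_mul_append, Fin.sum_append_mul_append]
  simp

end Padding

theorem stmt3_general (ℓ : ℕ) :
    ∃ F G : (Fin ℓ → ℝ) → (Fin (3 * ℓ) → ℝ),
      ∀ a b : Fin ℓ → ℝ,
        (∀ t, a t = 0 ∨ a t = 1) → (∀ t, b t = 0 ∨ b t = 1) →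
        (∀ t, F a t = 0 ∨ F a t = 1) ∧
        (∀ t, G b t = 0 ∨ G b t = 1) ∧
        (∑ t, F a t) = (ℓ : ℝ) ∧
        (∑ t, G b t) = (ℓ : ℝ) ∧
        (∑ t, F a t * G b t) = (∑ t, a t * b t) ∧
        (∑ t, F a t * G b t) / (euclNorm (F a) * euclNorm (G b)) =
          (∑ t, a t * b t) / (ℓ : ℝ) := by
  refine ⟨padOnesThenZeros, padZerosThenOnes, fun a b ha hb => ?_⟩
  have hFa := isBinary_padOnesThenZeros ha
  have hGb := isBinary_padZerosThenOnes hb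
  rw [inner_padOnesThenZeros_padZerosThenOnes,
    hFa.div_euclNorm_mul_euclNorm hGb (sum_padOnesThenZeros a) (sum_padZerosThenOnes b)]
  exact ⟨hFa, hGb, sum_padOnesThenZeros a, sum_padZerosThenOnes b, rfl, rfl⟩

/-- Correctness of the padding construction proving that bichromatic additive-gap
Most Similar Documents and bichromatic additive-gap Maximum Inner Product are
subquadratic equivalent. -/
theorem stmt3 (ℓ : ℕ) (hℓ : 1 ≤ ℓ) :
    ∃ F G : (Fin ℓ → ℝ) → (Fin (3 * ℓ) → ℝ),
      ∀ a b : Fin ℓ → ℝ,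
        (∀ t, a t = 0 ∨ a t = 1) → (∀ t, b t = 0 ∨ b t = 1) →
        (∀ t, F a t = 0 ∨ F a t = 1) ∧
        (∀ t, G b t = 0 ∨ G b t = 1) ∧
        (∑ t, F a t) = (ℓ : ℝ) ∧
        (∑ t, G b t) = (ℓ : ℝ) ∧
        (∑ t, F a t * G b t) = (∑ t, a t * b t) ∧
        (∑ t, F a t * G b t) / (euclNorm (F a) * euclNorm (G b)) =
          (∑ t, a t * b t) / (ℓ : ℝ) :=
  stmt3_general ℓ
end

section
/- Let n ≥ 2, ℓ ≥ 1, and let v₁,…,vₙ : Fin ℓ → ℝ be nonzero binary vectors. Let γ ≥ 1 and write cos(i,j) = ⟨vᵢ, vⱼ⟩ / (‖vᵢ‖ · ‖vⱼ‖). Suppose i* ≠ j* is a pair of indices satisfying min_{i ≠ j} cos(i,j) ≤ cos(i*,j*) ≤ γ · min_{i ≠ j} cos(i,j) (i.e., (i*, j*) is a γ-approximate least similar pair). Then cos(i*, j*) = 0 if and only if there exist i ≠ j with ⟨vᵢ, vⱼ⟩ = 0. -/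
open Finset

/-!
All cosine similarities of binary vectors are nonnegative, so the least similarity `m` is `0`
exactly when some pair is orthogonal. In that case `0 ≤ cos(i*, j*) ≤ γ · m = 0`; conversely
`cos(i*, j*) = 0` makes `(i*, j*)` itself orthogonal, the norms being positive.
-/

section

variable {ι : Type*} [Fintype ι]

lemma euclNorm_pos {v : ι → ℝ} (hv : v ≠ 0) : 0 < euclNorm v := by
  obtain ⟨t, ht⟩ := Function.ne_iff.mp hv
  exact Real.sqrt_pos.mpr <|
    sum_pos' (fun s _ => sq_nonneg (v s)) ⟨t, mem_univ t, sq_pos_of_ne_zero ht⟩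

noncomputable def cosSim (u w : ι → ℝ) : ℝ :=
  (∑ t, u t * w t) / (euclNorm u * euclNorm w)

lemma cosSim_nonneg {u w : ι → ℝ} (hu : ∀ t, 0 ≤ u t)
    (hw : ∀ t, 0 ≤ w t) : 0 ≤ cosSim u w :=
  div_nonneg (sum_nonneg fun t _ => mul_nonneg (hu t) (hw t))
    (mul_nonneg (Real.sqrt_nonneg _) (Real.sqrt_nonneg _))

lemma cosSim_eq_zero_iff {u w : ι → ℝ} (hu : u ≠ 0) (hw : w ≠ 0) :
    cosSim u w = 0 ↔ ∑ t, u t * w t = 0 := by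
  rw [cosSim, div_eq_zero_iff, or_iff_left (mul_pos (euclNorm_pos hu) (euclNorm_pos hw)).ne']

lemma approxLeastPair_eq_zero_iff {ι : Type*} {c : ι → ι → ℝ} (hc : ∀ i j, 0 ≤ c i j)
    {m γ : ℝ} (hm : IsLeast {x | ∃ i j, i ≠ j ∧ x = c i j} m) {a b : ι} (hab : a ≠ b)
    (hle : c a b ≤ γ * m) : c a b = 0 ↔ ∃ i j, i ≠ j ∧ c i j = 0 := by
  refine ⟨fun h => ⟨a, b, hab, h⟩, fun ⟨i, j, hij, hzero⟩ => ?_⟩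
  have hm0 : m = 0 := hm.unique ⟨⟨i, j, hij, hzero.symm⟩, fun _ ⟨k, l, _, hx⟩ => hx ▸ hc k l⟩
  exact le_antisymm (by simpa [hm0] using hle) (hc a b)

theorem stmt4_general (n ℓ : ℕ)
    (v : Fin n → Fin ℓ → ℝ)
    (hbin : ∀ i t, v i t = 0 ∨ v i t = 1)
    (hnz : ∀ i, v i ≠ 0)
    (γ : ℝ)
    (c : Fin n → Fin n → ℝ)
    (hc : ∀ i j, c i j = (∑ t, v i t * v j t) / (euclNorm (v i) * euclNorm (v j)))
    (m : ℝ)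
    (hm : IsLeast {x : ℝ | ∃ i j : Fin n, i ≠ j ∧ x = c i j} m)
    (istar jstar : Fin n) (hne : istar ≠ jstar)
    (h2 : c istar jstar ≤ γ * m) :
    c istar jstar = 0 ↔ ∃ i j : Fin n, i ≠ j ∧ (∑ t, v i t * v j t) = 0 := by
  have hv_nonneg : ∀ i t, 0 ≤ v i t := fun i t =>
    (hbin i t).elim (fun h => h.ge) (fun h => h ▸ zero_le_one)
  have hc_nonneg : ∀ i j, 0 ≤ c i j := fun i j => by
    rw [hc]; exact cosSim_nonneg (hv_nonneg i) (hv_nonneg j)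
  have hc_eq_zero : ∀ i j, c i j = 0 ↔ ∑ t, v i t * v j t = 0 := fun i j => by
    rw [hc]; exact cosSim_eq_zero_iff (hnz i) (hnz j)
  simp only [← hc_eq_zero]
  exact approxLeastPair_eq_zero_iff hc_nonneg hm hne h2

/-- Correctness of the reduction from Orthogonal Vectors to the γ-approximate Least
Similar Documents problem: a γ-approximate least similar pair has cosine similarity 0
iff there is an orthogonal pair. -/
theorem stmt4 (n ℓ : ℕ) (hn : 2 ≤ n) (hℓ : 1 ≤ ℓ)
    (v : Fin n → Fin ℓ → ℝ)
    (hbin : ∀ i t, v i t = 0 ∨ v i t = 1)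
    (hnz : ∀ i, v i ≠ 0)
    (γ : ℝ) (hγ : 1 ≤ γ)
    (c : Fin n → Fin n → ℝ)
    (hc : ∀ i j, c i j = (∑ t, v i t * v j t) / (euclNorm (v i) * euclNorm (v j)))
    (m : ℝ)
    (hm : IsLeast {x : ℝ | ∃ i j : Fin n, i ≠ j ∧ x = c i j} m)
    (istar jstar : Fin n) (hne : istar ≠ jstar)
    (h1 : m ≤ c istar jstar) (h2 : c istar jstar ≤ γ * m) :
    c istar jstar = 0 ↔ ∃ i j : Fin n, i ≠ j ∧ (∑ t, v i t * v j t) = 0 :=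
  stmt4_general n ℓ v hbin hnz γ c hc m hm istar jstar hne h2
end
end

section
/- Let n ≥ 2, ℓ ≥ 1, and let v₁,…,vₙ : Fin ℓ → ℝ be binary vectors. For each i define the real number Sᵢ = (∑_{j=1}^{n} n^{−3⟨vᵢ,vⱼ⟩}) / (∑_{k=1}^{n} n^{−3⟨vᵢ,vₖ⟩} + 1), where n^x denotes the real power of n. Then: (a) if there exist i* ≠ j* with ⟨v_{i*}, v_{j*}⟩ = 0, then S_{i*} ≥ 1/(n+1); and (b) if every vᵢ is nonzero and there is no pair i ≠ j with ⟨vᵢ, vⱼ⟩ = 0 (so that ⟨vᵢ, vⱼ⟩ ≥ 1 for all i, j), then Sᵢ ≤ 1/n² < 1/n^{1.5} for every i. -/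
open Finset

/-- The yes/no gap of the softmax attention entries in the construction showing a
one-unit transformer solves Orthogonal Vectors. -/
theorem stmt5 (n ℓ : ℕ) (hn : 2 ≤ n) (hℓ : 1 ≤ ℓ)
    (v : Fin n → Fin ℓ → ℝ)
    (hbin : ∀ i t, v i t = 0 ∨ v i t = 1)
    (S : Fin n → ℝ)
    (hS : ∀ i, S i =
      (∑ j, (n : ℝ) ^ (-3 * ∑ t, v i t * v j t)) /
        ((∑ k, (n : ℝ) ^ (-3 * ∑ t, v i t * v k t)) + 1)) :
    (∀ istar jstar : Fin n, istar ≠ jstar → (∑ t, v istar t * v jstar t) = 0 →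
      1 / ((n : ℝ) + 1) ≤ S istar) ∧
    ((∀ i, v i ≠ 0) → (∀ i j : Fin n, i ≠ j → (∑ t, v i t * v j t) ≠ 0) →
      ∀ i, S i ≤ 1 / (n : ℝ) ^ 2 ∧ 1 / (n : ℝ) ^ 2 < 1 / (n : ℝ) ^ (1.5 : ℝ)) := by
  have hn1 : (1:ℝ) < n := by
    have : (2:ℝ) ≤ n := by exact_mod_cast hn
    linarith
  have hn0 : (0:ℝ) < n := by linarith
  have hterm_nonneg : ∀ i j : Fin n, ∀ t, 0 ≤ v i t * v j t := by
    intro i j t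
    rcases hbin i t with h | h <;> rcases hbin j t with h' | h' <;> simp [h, h']
  have hpos : ∀ i j : Fin n, 0 < (n:ℝ) ^ (-3 * ∑ t, v i t * v j t) :=
    fun i j => Real.rpow_pos_of_pos hn0 _
  have hApos : ∀ i, 0 < ∑ j, (n:ℝ) ^ (-3 * ∑ t, v i t * v j t) :=
    fun i => Finset.sum_pos (fun j _ => hpos i j) ⟨⟨0, by omega⟩, Finset.mem_univ _⟩
  constructor
  · intro i j hij h0
    rw [hS i]
    have h1 : (1:ℝ) ≤ ∑ j', (n:ℝ) ^ (-3 * ∑ t, v i t * v j' t) := by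
      have he : (n:ℝ) ^ (-3 * ∑ t, v i t * v j t) = 1 := by rw [h0]; simp
      calc (1:ℝ) = (n:ℝ) ^ (-3 * ∑ t, v i t * v j t) := he.symm
        _ ≤ _ := Finset.single_le_sum (fun k _ => (hpos i k).le) (Finset.mem_univ j)
    have hA := hApos i
    rw [div_le_div_iff₀ (by linarith) (by linarith)]
    nlinarith
  · intro hvne hortho i
    have hip1 : ∀ j, (1:ℝ) ≤ ∑ t, v i t * v j t := by
      intro j
      have hex : ∃ t, v i t * v j t = 1 := by
        by_cases hij : i = j
        · subst hij
          obtain ⟨t, ht⟩ := Function.ne_iff.mp (hvne i)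
          have h1 : v i t = 1 := (hbin i t).resolve_left ht
          exact ⟨t, by rw [h1]; ring⟩
        · by_contra hc
          push_neg at hc
          apply hortho i j hij
          apply Finset.sum_eq_zero
          intro t _
          rcases hbin i t with h | h
          · simp [h]
          · rcases hbin j t with h' | h'
            · simp [h']
            · exact absurd (by rw [h, h']; ring) (hc t)
      obtain ⟨t, ht⟩ := hex
      calc (1:ℝ) = v i t * v j t := ht.symm
        _ ≤ _ := Finset.single_le_sum (fun t _ => hterm_nonneg i j t) (Finset.mem_univ t)
    have hAle : (∑ j, (n:ℝ) ^ (-3 * ∑ t, v i t * v j t)) ≤ n * (n:ℝ) ^ (-3:ℝ) := by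
      calc (∑ j, (n:ℝ) ^ (-3 * ∑ t, v i t * v j t)) ≤ ∑ _j : Fin n, (n:ℝ) ^ (-3:ℝ) := by
            apply Finset.sum_le_sum
            intro j _
            exact Real.rpow_le_rpow_of_exponent_le hn1.le (by nlinarith [hip1 j])
        _ = n * (n:ℝ) ^ (-3:ℝ) := by
            simp [Finset.sum_const, Finset.card_univ, nsmul_eq_mul]
    have hrw : (n:ℝ) ^ (-3:ℝ) = ((n:ℝ)^(3:ℕ))⁻¹ := by
      rw [show (-3:ℝ) = -((3:ℕ):ℝ) by norm_num, Real.rpow_neg hn0.le, Real.rpow_natCast]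
    have hbound : n * (n:ℝ) ^ (-3:ℝ) = 1 / (n:ℝ)^2 := by
      rw [hrw]
      field_simp
    constructor
    · rw [hS i]
      have hA := hApos i
      calc (∑ j, (n:ℝ) ^ (-3 * ∑ t, v i t * v j t)) /
            ((∑ k, (n:ℝ) ^ (-3 * ∑ t, v i t * v k t)) + 1)
          ≤ (∑ j, (n:ℝ) ^ (-3 * ∑ t, v i t * v j t)) :=
            div_le_self hA.le (by linarith)
        _ ≤ n * (n:ℝ) ^ (-3:ℝ) := hAle
        _ = 1 / (n:ℝ)^2 := hbound
    · apply one_div_lt_one_div_of_lt (Real.rpow_pos_of_pos hn0 _)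
      calc (n:ℝ) ^ (1.5:ℝ) < (n:ℝ) ^ (2:ℝ) := by
            rw [Real.rpow_lt_rpow_left_iff hn1]; norm_num
        _ = (n:ℝ) ^ 2 := by
            rw [show (2:ℝ) = ((2:ℕ):ℝ) by norm_num, Real.rpow_natCast]
end

section
/- For every n ≥ 2 and ℓ ≥ 1 there exist matrices Q, K ∈ ℝ^{ℓ×(ℓ+1)} and V ∈ ℝ^{ℓ×1} and a continuous function φ₂ : ℝ^{n+1} → ℝ such that the following holds for all binary vectors v₁,…,vₙ : Fin ℓ → ℝ. Let X ∈ ℝ^{(n+1)×ℓ} be the matrix whose i-th row is vᵢ for 1 ≤ i ≤ n and whose (n+1)-st row is the zero vector, and let y ∈ ℝ^{n+1} be the single column of softmax(X Q Kᵀ Xᵀ) X V, where softmax is applied row-wise, i.e., (softmax(M))_{i,j} = exp(M_{i,j}) / ∑_{j'} exp(M_{i,j'}). Then φ₂(y) = 1 if there exist indices 1 ≤ i ≠ j ≤ n with ⟨vᵢ, vⱼ⟩ = 0, and φ₂(y) = 0 otherwise. -/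
open Finset Matrix

/-- Row-wise softmax of a matrix. -/
noncomputable def softmaxMat {N M : Type*} [Fintype M] (A : Matrix N M ℝ) : Matrix N M ℝ :=
  fun i j => Real.exp (A i j) / ∑ j', Real.exp (A i j')

/-- A single standard attention unit with an output MLP (a continuous function) and
embedding dimension `ℓ+1` solves `OV_{n,ℓ}`. -/
theorem stmt6 (n ℓ : ℕ) (hn : 2 ≤ n) (hℓ : 1 ≤ ℓ) :
    ∃ (Q K : Matrix (Fin ℓ) (Fin (ℓ + 1)) ℝ) (V : Matrix (Fin ℓ) (Fin 1) ℝ)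
      (φ₂ : (Fin (n + 1) → ℝ) → ℝ),
      Continuous φ₂ ∧
      ∀ v : Fin n → Fin ℓ → ℝ, (∀ i t, v i t = 0 ∨ v i t = 1) →
        ∀ X : Matrix (Fin (n + 1)) (Fin ℓ) ℝ,
          (∀ (i : Fin n) (t : Fin ℓ), X i.castSucc t = v i t) →
          (∀ t : Fin ℓ, X (Fin.last n) t = 0) →
          ((∃ i j : Fin n, i ≠ j ∧ (∑ t, v i t * v j t) = 0) →
            φ₂ (fun i => (softmaxMat (X * Q * Kᵀ * Xᵀ) * X * V) i 0) = 1) ∧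
          (¬ (∃ i j : Fin n, i ≠ j ∧ (∑ t, v i t * v j t) = 0) →
            φ₂ (fun i => (softmaxMat (X * Q * Kᵀ * Xᵀ) * X * V) i 0) = 0) := by
  have hnR : (2:ℝ) ≤ (n:ℝ) := by exact_mod_cast hn
  have hlR : (1:ℝ) ≤ (ℓ:ℝ) := by exact_mod_cast hℓ
  have hnpos : (0:ℝ) < (n:ℝ) := by linarith
  have hlpos : (0:ℝ) < (ℓ:ℝ) := by linarith
  have hn1pos : (0:ℝ) < (n:ℝ) + 1 := by linarith
  obtain ⟨M, hM0, hMval⟩ :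
      ∃ M : ℝ, 0 ≤ M ∧ (n:ℝ) * (Real.exp (-M) * (ℓ:ℝ)) = 1/(2*((n:ℝ)+1)) := by
    have hCpos : (0:ℝ) < 2*((n:ℝ)+1)*(n:ℝ)*(ℓ:ℝ) :=
      mul_pos (mul_pos (mul_pos (by norm_num) hn1pos) hnpos) hlpos
    have hC1 : (1:ℝ) ≤ 2*((n:ℝ)+1)*(n:ℝ)*(ℓ:ℝ) := by
      have h12 : (12:ℝ) ≤ 2*((n:ℝ)+1)*(n:ℝ) := by nlinarith
      have h2 := mul_le_mul_of_nonneg_left hlR (by linarith : (0:ℝ) ≤ 2*((n:ℝ)+1)*(n:ℝ))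
      nlinarith
    refine ⟨Real.log (2*((n:ℝ)+1)*(n:ℝ)*(ℓ:ℝ)), Real.log_nonneg hC1, ?_⟩
    rw [Real.exp_neg, Real.exp_log hCpos]
    field_simp
  have hexpMpos : (0:ℝ) < Real.exp (-M) := Real.exp_pos _
  refine ⟨Matrix.of fun i c => if c = i.castSucc then -M else 0,
      Matrix.of fun i c => if c = i.castSucc then (1:ℝ) else 0,
      Matrix.of fun _ _ => (1:ℝ),
      fun y => max (min 1 (∑ i : Fin n, min 1 (max 0 (2*((n:ℝ)+1) * y i.castSucc - 1))))
          (1 - min 1 (max 0 (((n:ℝ)+1) * y (Fin.last n)))),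
      by fun_prop, ?_⟩
  intro v hv X hX hXl
  set S : Matrix (Fin (n+1)) (Fin (n+1)) ℝ :=
    Matrix.of fun i j => -M * ∑ t, X i t * X j t with hSdef
  have hS : X * (Matrix.of fun i c => if c = i.castSucc then -M else 0 : Matrix (Fin ℓ) (Fin (ℓ+1)) ℝ) *
      (Matrix.of fun (i : Fin ℓ) (c : Fin (ℓ+1)) => if c = i.castSucc then (1:ℝ) else 0)ᵀ * Xᵀ
      = S := by
    have hQK : (Matrix.of fun (i : Fin ℓ) (c : Fin (ℓ+1)) => if c = i.castSucc then -M else 0) *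
        (Matrix.of fun (i : Fin ℓ) (c : Fin (ℓ+1)) => if c = i.castSucc then (1:ℝ) else 0)ᵀ
        = (-M) • (1 : Matrix (Fin ℓ) (Fin ℓ) ℝ) := by
      ext i j
      simp [Matrix.mul_apply, Matrix.one_apply, ite_and, Fin.castSucc_inj, eq_comm]
    rw [Matrix.mul_assoc X _ _, hQK]
    ext i j
    simp [hSdef, Matrix.mul_apply, Finset.mul_sum, mul_comm, mul_assoc, mul_left_comm]
  rw [hS]
  set s : Fin (n+1) → ℝ := fun j => ∑ t, X j t with hsdef
  set D : Fin (n+1) → ℝ := fun i => ∑ j, Real.exp (S i j) with hDdef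
  have hy : ∀ p : Fin (n+1),
      (softmaxMat S * X * (Matrix.of fun (_ : Fin ℓ) (_ : Fin 1) => (1:ℝ))) p 0
      = (∑ j, Real.exp (S p j) * s j) / D p := by
    intro p
    rw [Matrix.mul_assoc]
    simp only [Matrix.mul_apply, softmaxMat, Matrix.of_apply, mul_one, hsdef, hDdef]
    rw [Finset.sum_div]
    exact Finset.sum_congr rfl fun j _ => div_mul_eq_mul_div _ _ _
  simp only [hy]
  -- basic facts
  have hvnn : ∀ m t, 0 ≤ v m t := by
    intro m t; rcases hv m t with h | h <;> rw [h] <;> norm_num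
  have hX01 : ∀ p t, X p t = 0 ∨ X p t = 1 := by
    intro p t
    refine Fin.lastCases ?_ ?_ p
    · exact Or.inl (hXl t)
    · intro i; rw [hX i t]; exact hv i t
  have hXnn : ∀ p t, 0 ≤ X p t := by
    intro p t; rcases hX01 p t with h | h <;> rw [h] <;> norm_num
  have hXle : ∀ p t, X p t ≤ 1 := by
    intro p t; rcases hX01 p t with h | h <;> rw [h] <;> norm_num
  have hsnn : ∀ j, 0 ≤ s j := fun j => Finset.sum_nonneg fun t _ => hXnn j t
  have hsle : ∀ j, s j ≤ (ℓ:ℝ) := by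
    intro j
    calc s j ≤ ∑ _t : Fin ℓ, (1:ℝ) := Finset.sum_le_sum fun t _ => hXle j t
    _ = (ℓ:ℝ) := by simp
  have hslast : s (Fin.last n) = 0 := Finset.sum_eq_zero fun t _ => hXl t
  have hSle0 : ∀ i j, S i j ≤ 0 := by
    intro i j
    have h1 : 0 ≤ ∑ t, X i t * X j t :=
      Finset.sum_nonneg fun t _ => mul_nonneg (hXnn i t) (hXnn j t)
    have h2 := mul_nonneg hM0 h1
    show -M * (∑ t, X i t * X j t) ≤ 0
    nlinarith
  have hexple1 : ∀ i j, Real.exp (S i j) ≤ 1 :=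
    fun i j => Real.exp_le_one_iff.mpr (hSle0 i j)
  have hSlastcol : ∀ i, S i (Fin.last n) = 0 := by
    intro i
    show -M * (∑ t, X i t * X (Fin.last n) t) = 0
    rw [Finset.sum_eq_zero fun t _ => by rw [hXl t, mul_zero], mul_zero]
  have hSlastrow : ∀ j, S (Fin.last n) j = 0 := by
    intro j
    show -M * (∑ t, X (Fin.last n) t * X j t) = 0
    rw [Finset.sum_eq_zero fun t _ => by rw [hXl t, zero_mul], mul_zero]
  have hDpos : ∀ i, 0 < D i :=
    fun i => Finset.sum_pos (fun j _ => Real.exp_pos _) ⟨Fin.last n, Finset.mem_univ _⟩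
  have hD1 : ∀ i, 1 ≤ D i := by
    intro i
    calc (1:ℝ) = Real.exp (S i (Fin.last n)) := by rw [hSlastcol i, Real.exp_zero]
    _ ≤ D i := Finset.single_le_sum (f := fun j => Real.exp (S i j))
        (fun j _ => (Real.exp_pos _).le) (Finset.mem_univ _)
  have hDle : ∀ i, D i ≤ (n:ℝ) + 1 := by
    intro i
    calc D i ≤ ∑ _j : Fin (n+1), (1:ℝ) := Finset.sum_le_sum fun j _ => hexple1 i j
    _ = (n:ℝ) + 1 := by
        rw [Finset.sum_const, Finset.card_univ, Fintype.card_fin, nsmul_eq_mul, mul_one]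
        push_cast; ring
  have hNumnn : ∀ p, 0 ≤ ∑ j, Real.exp (S p j) * s j :=
    fun p => Finset.sum_nonneg fun j _ => mul_nonneg (Real.exp_pos _).le (hsnn j)
  have hSk : ∀ i j : Fin n, S i.castSucc j.castSucc = -M * ∑ t, v i t * v j t := by
    intro i j
    show -M * (∑ t, X i.castSucc t * X j.castSucc t) = _
    congr 1
    exact Finset.sum_congr rfl fun t _ => by rw [hX i t, hX j t]
  have hscast : ∀ i : Fin n, s i.castSucc = ∑ t, v i t :=
    fun i => Finset.sum_congr rfl fun t _ => hX i t
  have hs1of1 : ∀ (j : Fin n) (t : Fin ℓ), v j t = 1 → 1 ≤ s j.castSucc := by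
    intro j t ht
    rw [hscast j]
    calc (1:ℝ) = v j t := ht.symm
    _ ≤ ∑ t', v j t' := Finset.single_le_sum (f := fun t' => v j t')
        (fun t' _ => hvnn j t') (Finset.mem_univ t)
  constructor
  · -- YES case
    rintro ⟨i, j, hij, hk0⟩
    by_cases hz : ∀ m t, v m t = 0
    · -- all vectors zero: output vector is 0
      have hX0 : ∀ p t, X p t = 0 := by
        intro p t
        refine Fin.lastCases (hXl t) (fun m => ?_) p
        rw [hX m t]; exact hz m t
      have hs0 : ∀ p, s p = 0 := fun p => Finset.sum_eq_zero fun t _ => hX0 p t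
      have hy0 : ∀ p : Fin (n+1), (∑ j, Real.exp (S p j) * s j) / D p = 0 := by
        intro p
        rw [Finset.sum_eq_zero fun j _ => by rw [hs0 j, mul_zero], zero_div]
      simp only [hy0]
      norm_num
    · push_neg at hz
      obtain ⟨m, tm, hm⟩ := hz
      have hm1 : v m tm = 1 := (hv m tm).resolve_left hm
      obtain ⟨a, b, hk0ab, tb, hb1⟩ :
          ∃ a b : Fin n, (∑ t, v a t * v b t) = 0 ∧ ∃ t, v b t = 1 := by
        by_cases hjz : ∃ t, v j t = 1
        · exact ⟨i, j, hk0, hjz⟩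
        · push_neg at hjz
          have hj0 : ∀ t, v j t = 0 := fun t => (hv j t).resolve_right (hjz t)
          exact ⟨j, m, Finset.sum_eq_zero fun t _ => by rw [hj0 t, zero_mul], tm, hm1⟩
      have hsb : 1 ≤ s b.castSucc := hs1of1 b tb hb1
      have hNum1 : 1 ≤ ∑ j, Real.exp (S a.castSucc j) * s j := by
        calc (1:ℝ) ≤ s b.castSucc := hsb
        _ = Real.exp (S a.castSucc b.castSucc) * s b.castSucc := by
            rw [hSk a b, hk0ab, mul_zero, Real.exp_zero, one_mul]
        _ ≤ ∑ j, Real.exp (S a.castSucc j) * s j :=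
            Finset.single_le_sum (f := fun j => Real.exp (S a.castSucc j) * s j)
              (fun j _ => mul_nonneg (Real.exp_pos _).le (hsnn j)) (Finset.mem_univ _)
      have hya : 1/((n:ℝ)+1) ≤ (∑ j, Real.exp (S a.castSucc j) * s j) / D a.castSucc := by
        rw [div_le_div_iff₀ hn1pos (hDpos _)]
        have h1 := hDle a.castSucc
        nlinarith
      have hterm1 : min 1 (max 0 (2*((n:ℝ)+1) *
          ((∑ j, Real.exp (S a.castSucc j) * s j) / D a.castSucc) - 1)) = 1 := by
        have h2 : (1:ℝ) ≤ 2*((n:ℝ)+1) *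
            ((∑ j, Real.exp (S a.castSucc j) * s j) / D a.castSucc) - 1 := by
          have h3 := mul_le_mul_of_nonneg_left hya (by linarith : (0:ℝ) ≤ 2*((n:ℝ)+1))
          have heq : 2*((n:ℝ)+1) * (1/((n:ℝ)+1)) = 2 := by field_simp
          linarith [heq ▸ h3]
        rw [max_eq_right (by linarith), min_eq_left h2]
      have hsum1 : (1:ℝ) ≤ ∑ i : Fin n, min 1 (max 0 (2*((n:ℝ)+1) *
          ((∑ j, Real.exp (S i.castSucc j) * s j) / D i.castSucc) - 1)) := by
        calc (1:ℝ) = min 1 (max 0 (2*((n:ℝ)+1) *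
            ((∑ j, Real.exp (S a.castSucc j) * s j) / D a.castSucc) - 1)) := hterm1.symm
        _ ≤ _ := Finset.single_le_sum (f := fun i : Fin n => min 1 (max 0 (2*((n:ℝ)+1) *
              ((∑ j, Real.exp (S i.castSucc j) * s j) / D i.castSucc) - 1)))
            (fun i _ => le_min (by norm_num) (le_max_left _ _)) (Finset.mem_univ a)
      rw [min_eq_left hsum1]
      have hB : (0:ℝ) ≤ min 1 (max 0 (((n:ℝ)+1) *
          ((∑ j, Real.exp (S (Fin.last n) j) * s j) / D (Fin.last n)))) :=
        le_min (by norm_num) (le_max_left _ _)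
      exact max_eq_left (by linarith)
  · -- NO case
    intro hno
    push_neg at hno
    have hone : ∀ i : Fin n, ∃ t, v i t = 1 := by
      intro i
      have hnt : Nontrivial (Fin n) := by
        refine ⟨⟨0, by omega⟩, ⟨1, by omega⟩, ?_⟩
        simp [Fin.ext_iff]
      obtain ⟨j, hj⟩ := exists_ne i
      have hk := hno j i hj
      by_contra h
      push_neg at h
      have h0 : ∀ t, v i t = 0 := fun t => (hv i t).resolve_right (h t)
      exact hk (Finset.sum_eq_zero fun t _ => by rw [h0 t, mul_zero])
    have hterm01 : ∀ (i j : Fin n) t, v i t * v j t = 0 ∨ v i t * v j t = 1 := by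
      intro i j t
      rcases hv i t with h | h <;> rcases hv j t with h' | h' <;> rw [h, h'] <;> norm_num
    have htermnn : ∀ (i j : Fin n) t, (0:ℝ) ≤ v i t * v j t :=
      fun i j t => mul_nonneg (hvnn i t) (hvnn j t)
    have hk1 : ∀ i j : Fin n, 1 ≤ ∑ t, v i t * v j t := by
      intro i j
      have hex : ∃ t, v i t * v j t = 1 := by
        by_cases hij : i = j
        · subst hij
          obtain ⟨t, ht⟩ := hone i
          exact ⟨t, by rw [ht, one_mul]⟩
        · by_contra h
          push_neg at h
          exact hno i j hij
            (Finset.sum_eq_zero fun t _ => (hterm01 i j t).resolve_right (h t))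
      obtain ⟨t, ht⟩ := hex
      calc (1:ℝ) = v i t * v j t := ht.symm
      _ ≤ ∑ t, v i t * v j t := Finset.single_le_sum (f := fun t => v i t * v j t)
          (fun t _ => htermnn i j t) (Finset.mem_univ t)
    have hs1 : ∀ j : Fin n, 1 ≤ s j.castSucc := by
      intro j
      obtain ⟨t, ht⟩ := hone j
      exact hs1of1 j t ht
    have hybound : ∀ i : Fin n,
        (∑ j, Real.exp (S i.castSucc j) * s j) / D i.castSucc ≤ 1/(2*((n:ℝ)+1)) := by
      intro i
      have htermle : ∀ j : Fin n, Real.exp (S i.castSucc j.castSucc) * s j.castSucc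
          ≤ Real.exp (-M) * (ℓ:ℝ) := by
        intro j
        have hexpb : Real.exp (S i.castSucc j.castSucc) ≤ Real.exp (-M) := by
          rw [hSk i j]
          apply Real.exp_le_exp.mpr
          have h1 := mul_le_mul_of_nonneg_left (hk1 i j) hM0
          nlinarith
        exact mul_le_mul hexpb (hsle j.castSucc) (hsnn j.castSucc) hexpMpos.le
      have hNumle : (∑ j, Real.exp (S i.castSucc j) * s j)
          ≤ (n:ℝ) * (Real.exp (-M) * (ℓ:ℝ)) := by
        rw [Fin.sum_univ_castSucc, hslast, mul_zero, add_zero]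
        calc ∑ j : Fin n, Real.exp (S i.castSucc j.castSucc) * s j.castSucc
            ≤ ∑ _j : Fin n, Real.exp (-M) * (ℓ:ℝ) := Finset.sum_le_sum fun j _ => htermle j
        _ = (n:ℝ) * (Real.exp (-M) * (ℓ:ℝ)) := by
            rw [Finset.sum_const, Finset.card_univ, Fintype.card_fin, nsmul_eq_mul]
      calc (∑ j, Real.exp (S i.castSucc j) * s j) / D i.castSucc
          ≤ (∑ j, Real.exp (S i.castSucc j) * s j) := div_le_self (hNumnn _) (hD1 _)
      _ ≤ 1/(2*((n:ℝ)+1)) := by rw [← hMval]; exact hNumle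
    have hterm0 : ∀ i : Fin n, min 1 (max 0 (2*((n:ℝ)+1) *
        ((∑ j, Real.exp (S i.castSucc j) * s j) / D i.castSucc) - 1)) = 0 := by
      intro i
      have hle : 2*((n:ℝ)+1) *
          ((∑ j, Real.exp (S i.castSucc j) * s j) / D i.castSucc) - 1 ≤ 0 := by
        have h3 := mul_le_mul_of_nonneg_left (hybound i) (by linarith : (0:ℝ) ≤ 2*((n:ℝ)+1))
        have heq : 2*((n:ℝ)+1) * (1/(2*((n:ℝ)+1))) = 1 := by
          rw [mul_one_div, div_self (by linarith : 2*((n:ℝ)+1) ≠ 0)]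
        linarith [heq ▸ h3]
      rw [max_eq_left hle]
      exact min_eq_right (by norm_num)
    rw [Finset.sum_eq_zero fun i _ => hterm0 i, min_eq_right (by norm_num : (0:ℝ) ≤ 1)]
    have hB : min 1 (max 0 (((n:ℝ)+1) *
        ((∑ j, Real.exp (S (Fin.last n) j) * s j) / D (Fin.last n)))) = 1 := by
      have hNumlast : (∑ j, Real.exp (S (Fin.last n) j) * s j) = ∑ j, s j :=
        Finset.sum_congr rfl fun j _ => by rw [hSlastrow j, Real.exp_zero, one_mul]
      have hDlast : D (Fin.last n) = (n:ℝ) + 1 := by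
        show (∑ j, Real.exp (S (Fin.last n) j)) = (n:ℝ) + 1
        rw [Finset.sum_congr rfl fun j _ => by rw [hSlastrow j, Real.exp_zero]]
        rw [Finset.sum_const, Finset.card_univ, Fintype.card_fin, nsmul_eq_mul, mul_one]
        push_cast; ring
      have hsumge : (n:ℝ) ≤ ∑ j, s j := by
        rw [Fin.sum_univ_castSucc, hslast, add_zero]
        calc (n:ℝ) = ∑ _j : Fin n, (1:ℝ) := by simp
        _ ≤ ∑ j : Fin n, s j.castSucc := Finset.sum_le_sum fun j _ => hs1 j
      have hval : ((n:ℝ)+1) * ((∑ j, Real.exp (S (Fin.last n) j) * s j) / D (Fin.last n))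
          = ∑ j, s j := by
        rw [hNumlast, hDlast, mul_comm, div_mul_cancel₀ _ (by linarith : (n:ℝ)+1 ≠ 0)]
      rw [hval]
      have h1 : (1:ℝ) ≤ ∑ j, s j := by linarith
      rw [max_eq_right (by linarith)]
      exact min_eq_left h1
    rw [hB]
    norm_num
end

section
/- Let n ≥ 2, let θ : Fin n → Fin n → ℝ, let w : Fin n → ℝ satisfy 1 ≤ w j ≤ W for all j, and let τ ∈ ℝ, β > 0, δ > 0. For each i define Aᵢ = (∑_{j ≠ i} exp(β · θ i j) · w j) / (∑_{k ≠ i} exp(β · θ i k) + exp(β · τ)). Then: (a) if there exist i ≠ j with θ i j ≥ τ, then there exists i with Aᵢ ≥ 1/n; and (b) if θ i j ≤ τ − δ for all i ≠ j, then Aᵢ ≤ W · n · exp(−β · δ) for every i. -/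
/-!
If some score `θ i j` reaches `τ`, the threshold weight `exp (β τ)` is at most the row's
softmax mass `∑ exp (β θ i k)`, so `A i ≥ 1/2 ≥ 1/n` because all values are at least `1`.
If all scores are at most `τ - δ`, each numerator term is at most `W exp (β τ) exp (-β δ)`,
while the denominator is at least `exp (β τ)`.
-/

open Finset

lemma half_le_sum_mul_div_sum_add {ι : Type*} {s : Finset ι} {a w : ι → ℝ} {c : ℝ}
    (ha : ∀ k ∈ s, 0 ≤ a k) (hw : ∀ k ∈ s, 1 ≤ w k) (hc : 0 < c)
    (hcs : c ≤ ∑ k ∈ s, a k) :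
    1 / 2 ≤ (∑ k ∈ s, a k * w k) / (∑ k ∈ s, a k + c) := by
  have hsum : ∑ k ∈ s, a k ≤ ∑ k ∈ s, a k * w k :=
    sum_le_sum fun k hk => le_mul_of_one_le_right (ha k hk) (hw k hk)
  rw [le_div_iff₀ (by linarith)]
  linarith

lemma sum_mul_div_sum_add_le {ι : Type*} {s : Finset ι} {a w : ι → ℝ} {c M W : ℝ}
    (ha : ∀ k ∈ s, 0 ≤ a k) (haM : ∀ k ∈ s, a k ≤ M) (hwW : ∀ k ∈ s, w k ≤ W)
    (hM : 0 ≤ M) (hW : 0 ≤ W) (hc : 0 < c) :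
    (∑ k ∈ s, a k * w k) / (∑ k ∈ s, a k + c) ≤ W * #s * (M / c) := by
  have hterm : ∀ k ∈ s, a k * w k ≤ M * W := fun k hk =>
    (mul_le_mul_of_nonneg_left (hwW k hk) (ha k hk)).trans
      (mul_le_mul_of_nonneg_right (haM k hk) hW)
  have hnum : ∑ k ∈ s, a k * w k ≤ #s * (M * W) := by
    simpa using sum_le_card_nsmul s _ _ hterm
  have hden : c ≤ ∑ k ∈ s, a k + c := le_add_of_nonneg_left (sum_nonneg ha)
  calc (∑ k ∈ s, a k * w k) / (∑ k ∈ s, a k + c) ≤ #s * (M * W) / c :=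
        div_le_div₀ (by positivity) hnum hc hden
    _ = W * #s * (M / c) := by ring

open Real in
theorem stmt7_general (n : ℕ)
    (θ : Fin n → Fin n → ℝ) (w : Fin n → ℝ) (W : ℝ)
    (hw : ∀ j, 1 ≤ w j ∧ w j ≤ W)
    (τ β δ : ℝ) (hβ : 0 < β)
    (A : Fin n → ℝ)
    (hA : ∀ i, A i =
      (∑ j ∈ Finset.univ.erase i, Real.exp (β * θ i j) * w j) /
        ((∑ k ∈ Finset.univ.erase i, Real.exp (β * θ i k)) + Real.exp (β * τ))) :
    ((∃ i j : Fin n, i ≠ j ∧ τ ≤ θ i j) → ∃ i, 1 / (n : ℝ) ≤ A i) ∧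
    ((∀ i j : Fin n, i ≠ j → θ i j ≤ τ - δ) →
      ∀ i, A i ≤ W * n * Real.exp (-(β * δ))) := by
  refine ⟨fun ⟨i, j, hij, hτ⟩ => ⟨i, ?_⟩, fun hgap i => ?_⟩
  · have hn : (2 : ℝ) ≤ n := by
      have : 1 < Fintype.card (Fin n) := Fintype.one_lt_card_iff.2 ⟨i, j, hij⟩
      exact_mod_cast (by simpa using this : 1 < n)
    have hj : j ∈ univ.erase i := mem_erase.2 ⟨hij.symm, mem_univ j⟩
    have hthreshold : exp (β * τ) ≤ ∑ k ∈ univ.erase i, exp (β * θ i k) :=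
      (exp_le_exp.2 (mul_le_mul_of_nonneg_left hτ hβ.le)).trans
        (single_le_sum (f := fun k => exp (β * θ i k)) (fun k _ => (exp_pos _).le) hj)
    calc 1 / (n : ℝ) ≤ 1 / 2 := one_div_le_one_div_of_le two_pos hn
      _ ≤ A i := hA i ▸ half_le_sum_mul_div_sum_add (fun k _ => (exp_pos _).le)
          (fun k _ => (hw k).1) (exp_pos _) hthreshold
  · have hW : 0 ≤ W := by linarith [hw i]
    have hscore : ∀ k ∈ univ.erase i, exp (β * θ i k) ≤ exp (β * (τ - δ)) := fun k hk =>
      exp_le_exp.2 (mul_le_mul_of_nonneg_left (hgap i k (mem_erase.1 hk).1.symm) hβ.le)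
    calc A i ≤ W * #(univ.erase i) * (exp (β * (τ - δ)) / exp (β * τ)) :=
          hA i ▸ sum_mul_div_sum_add_le (fun k _ => (exp_pos _).le) hscore
            (fun k _ => (hw k).2) (exp_pos _).le hW (exp_pos _)
      _ ≤ W * n * exp (-(β * δ)) := by
          rw [← exp_sub, show β * (τ - δ) - β * τ = -(β * δ) by ring]
          gcongr
          simp

/-- A generic gap lemma for softmax attention scores with an appended threshold token. -/
theorem stmt7 (n : ℕ) (hn : 2 ≤ n)
    (θ : Fin n → Fin n → ℝ) (w : Fin n → ℝ) (W : ℝ)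
    (hw : ∀ j, 1 ≤ w j ∧ w j ≤ W)
    (τ β δ : ℝ) (hβ : 0 < β) (hδ : 0 < δ)
    (A : Fin n → ℝ)
    (hA : ∀ i, A i =
      (∑ j ∈ Finset.univ.erase i, Real.exp (β * θ i j) * w j) /
        ((∑ k ∈ Finset.univ.erase i, Real.exp (β * θ i k)) + Real.exp (β * τ))) :
    ((∃ i j : Fin n, i ≠ j ∧ τ ≤ θ i j) → ∃ i, 1 / (n : ℝ) ≤ A i) ∧
    ((∀ i j : Fin n, i ≠ j → θ i j ≤ τ - δ) →
      ∀ i, A i ≤ W * n * Real.exp (-(β * δ))) :=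
  stmt7_general n θ w W hw τ β δ hβ A hA
end

section
/- Let n ≥ 2, ℓ ≥ 1, let t be an integer with 1 ≤ t ≤ ℓ, and let v₁,…,vₙ : Fin ℓ → ℝ be binary vectors. For each i define Aᵢ = (∑_{j ≠ i} n^{3(⟨vᵢ,vⱼ⟩+1)} · (∑_t vⱼ t)) / (∑_{k ≠ i} n^{3(⟨vᵢ,vₖ⟩+1)} + n^{3(t+1)}), where n^x denotes the real power of n. Then: (a) if there exist i ≠ j with ⟨vᵢ, vⱼ⟩ ≥ t, there exists i with Aᵢ ≥ 1/(n+1); and (b) if ⟨vᵢ, vⱼ⟩ ≤ t − 1 for all i ≠ j, then Aᵢ ≤ ℓ/n² for every i; in particular, if additionally ℓ · (n+1)^{1.5} < n², then Aᵢ < 1/(n+1)^{1.5} for every i. -/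
/-!
With key/query scale `3 log n`, the attention weight of token `k` seen from token `i` is
`n ^ (3 (⟨vᵢ, vₖ⟩ + 1))`, so inner products that differ by one change the weights by a factor
`n³`. If some pair reaches the threshold `t`, take `i` in a pair `(i, j)` of maximal inner
product: the weight of `j` is the largest weight in the row, is at least the end-token weight,
and carries a value `∑ vⱼ ≥ ⟨vᵢ, vⱼ⟩ ≥ 1`, so it keeps a `1/n` share of the attention mass.
If no pair reaches `t`, every weight other than the end token's is at most `n³` times smaller
than the end-token weight, so the at most `n` values, each at most `ℓ`, contribute at most
`n · ℓ / n³`.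
-/

open Finset Matrix

section WeightedAverage

variable {ι : Type*} {s : Finset ι} {w x : ι → ℝ}

theorem one_div_card_add_one_le_sum_mul_div {c : ℝ} {j : ι}
    (hw : ∀ k ∈ s, 0 ≤ w k) (hx : ∀ k ∈ s, 0 ≤ x k) (hj : j ∈ s)
    (hmax : ∀ k ∈ s, w k ≤ w j) (hwj : 0 < w j) (hxj : 1 ≤ x j) (hc0 : 0 ≤ c) (hc : c ≤ w j) :
    1 / (#s + 1 : ℝ) ≤ (∑ k ∈ s, w k * x k) / (∑ k ∈ s, w k + c) := by
  have hnum : w j ≤ ∑ k ∈ s, w k * x k :=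
    calc w j ≤ w j * x j := le_mul_of_one_le_right hwj.le hxj
      _ ≤ ∑ k ∈ s, w k * x k :=
        single_le_sum (fun k hk => mul_nonneg (hw k hk) (hx k hk)) hj
  have hden_pos : 0 < ∑ k ∈ s, w k + c :=
    add_pos_of_pos_of_nonneg (hwj.trans_le (single_le_sum hw hj)) hc0
  have hden : ∑ k ∈ s, w k + c ≤ (#s + 1) * w j := by
    have := sum_le_card_nsmul s w (w j) hmax
    rw [nsmul_eq_mul] at this
    linarith
  rw [div_le_div_iff₀ (by positivity) hden_pos]
  nlinarith

theorem sum_mul_div_sum_add_le_s8 {W X K : ℝ} (hw : ∀ k ∈ s, 0 ≤ w k) (hwW : ∀ k ∈ s, w k ≤ W)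
    (hx : ∀ k ∈ s, 0 ≤ x k) (hxX : ∀ k ∈ s, x k ≤ X) (hW : 0 < W) (hK : 0 < K) :
    (∑ k ∈ s, w k * x k) / (∑ k ∈ s, w k + W * K) ≤ #s * X / K := by
  have hnum : ∑ k ∈ s, w k * x k ≤ #s * (W * X) := by
    rw [← nsmul_eq_mul]
    exact sum_le_card_nsmul s _ _ fun k hk => mul_le_mul (hwW k hk) (hxX k hk) (hx k hk) hW.le
  calc (∑ k ∈ s, w k * x k) / (∑ k ∈ s, w k + W * K)
      ≤ (∑ k ∈ s, w k * x k) / (W * K) :=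
        div_le_div_of_nonneg_left (sum_nonneg fun k hk => mul_nonneg (hw k hk) (hx k hk))
          (by positivity) (le_add_of_nonneg_left (sum_nonneg hw))
    _ ≤ #s * (W * X) / (W * K) := by gcongr
    _ = #s * X / K := by field_simp

end WeightedAverage

/-- `n ^ (3 (⟨vᵢ, vⱼ⟩ + 1))` is the softmax weight `exp (3 log n · ⟨(vᵢ, 1), (vⱼ, 1)⟩)`, and the end
token `(0, …, 0, t + 1)` gets weight `n ^ (3 (t + 1))` and value `0`. -/
noncomputable def attentionEntry {ℓ : ℕ} (n t : ℕ) (v : Fin n → Fin ℓ → ℝ) (i : Fin n) : ℝ :=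
  (∑ j ∈ univ.erase i, (n : ℝ) ^ (3 * (v i ⬝ᵥ v j + 1)) * ∑ s, v j s) /
    (∑ k ∈ univ.erase i, (n : ℝ) ^ (3 * (v i ⬝ᵥ v k + 1)) + (n : ℝ) ^ (3 * ((t : ℝ) + 1)))

section Attention

variable {n ℓ t : ℕ} {v : Fin n → Fin ℓ → ℝ}

theorem one_div_le_attentionEntry (hv0 : ∀ i s, 0 ≤ v i s) (hv1 : ∀ i s, v i s ≤ 1)
    (ht : 1 ≤ t) {i j : Fin n} (hij : i ≠ j) (htij : t ≤ v i ⬝ᵥ v j)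
    (hmax : ∀ k, i ≠ k → v i ⬝ᵥ v k ≤ v i ⬝ᵥ v j) :
    1 / (n : ℝ) ≤ attentionEntry n t v i := by
  have hn : (1 : ℝ) ≤ n := by exact_mod_cast i.pos
  have hcard : (#(univ.erase i) : ℝ) + 1 = n := by
    exact_mod_cast (card_erase_add_one (mem_univ i)).trans (card_fin n)
  have hdot_le_sum : v i ⬝ᵥ v j ≤ ∑ s, v j s :=
    sum_le_sum fun s _ => mul_le_of_le_one_left (hv0 j s) (hv1 i s)
  rw [← hcard]
  refine one_div_card_add_one_le_sum_mul_div (fun k _ => by positivity)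
    (fun k _ => sum_nonneg fun s _ => hv0 k s) (mem_erase.mpr ⟨hij.symm, mem_univ j⟩)
    (fun k hk => Real.rpow_le_rpow_of_exponent_le hn ?_) (by positivity) ?_ (by positivity)
    (Real.rpow_le_rpow_of_exponent_le hn ?_)
  · linarith [hmax k (mem_erase.mp hk).1.symm]
  · exact le_trans (by exact_mod_cast ht) (htij.trans hdot_le_sum)
  · linarith

theorem attentionEntry_le (hv0 : ∀ i s, 0 ≤ v i s) (hv1 : ∀ i s, v i s ≤ 1) (i : Fin n)
    (hbelow : ∀ k, i ≠ k → v i ⬝ᵥ v k ≤ t - 1) :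
    attentionEntry n t v i ≤ ℓ / (n : ℝ) ^ 2 := by
  have hn0 : (0 : ℝ) < n := by exact_mod_cast i.pos
  have hn : (1 : ℝ) ≤ n := by exact_mod_cast i.pos
  have hend : (n : ℝ) ^ (3 * ((t : ℝ) + 1)) = (n : ℝ) ^ (3 * (t : ℝ)) * (n : ℝ) ^ 3 := by
    rw [mul_add, mul_one, Real.rpow_add hn0]
    norm_cast
  have hcard : (#(univ.erase i) : ℝ) ≤ n := by
    exact_mod_cast (card_erase_le).trans (card_fin n).le
  rw [attentionEntry, hend]
  calc _ ≤ #(univ.erase i) * (ℓ : ℝ) / (n : ℝ) ^ 3 :=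
        sum_mul_div_sum_add_le_s8 (fun k _ => by positivity)
          (fun k hk => Real.rpow_le_rpow_of_exponent_le hn
            (by linarith [hbelow k (mem_erase.mp hk).1.symm]))
          (fun k _ => sum_nonneg fun s _ => hv0 k s)
          (fun k _ => (sum_le_card_nsmul _ _ 1 fun s _ => hv1 k s).trans (by simp))
          (by positivity) (by positivity)
    _ ≤ n * ℓ / (n : ℝ) ^ 3 := by gcongr
    _ = ℓ / (n : ℝ) ^ 2 := by field_simp

end Attention

theorem stmt8_general (n ℓ t : ℕ) (ht1 : 1 ≤ t)
    (v : Fin n → Fin ℓ → ℝ)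
    (hbin : ∀ i s, v i s = 0 ∨ v i s = 1)
    (A : Fin n → ℝ)
    (hA : ∀ i, A i =
      (∑ j ∈ Finset.univ.erase i,
          (n : ℝ) ^ (3 * ((∑ s, v i s * v j s) + 1)) * (∑ s, v j s)) /
        ((∑ k ∈ Finset.univ.erase i, (n : ℝ) ^ (3 * ((∑ s, v i s * v k s) + 1))) +
          (n : ℝ) ^ (3 * ((t : ℝ) + 1)))) :
    ((∃ i j : Fin n, i ≠ j ∧ (t : ℝ) ≤ ∑ s, v i s * v j s) →
      ∃ i, 1 / ((n : ℝ) + 1) ≤ A i) ∧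
    ((∀ i j : Fin n, i ≠ j → (∑ s, v i s * v j s) ≤ (t : ℝ) - 1) →
      (∀ i, A i ≤ (ℓ : ℝ) / (n : ℝ) ^ 2) ∧
      ((ℓ : ℝ) * ((n : ℝ) + 1) ^ (1.5 : ℝ) < (n : ℝ) ^ 2 →
        ∀ i, A i < 1 / ((n : ℝ) + 1) ^ (1.5 : ℝ))) := by
  obtain rfl : A = attentionEntry n t v := funext hA
  have hv0 : ∀ i s, 0 ≤ v i s := fun i s => by rcases hbin i s with h | h <;> simp [h]
  have hv1 : ∀ i s, v i s ≤ 1 := fun i s => by rcases hbin i s with h | h <;> simp [h]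
  constructor
  · rintro ⟨i₀, j₀, hij₀, ht₀⟩
    obtain ⟨⟨i, j⟩, hij, hmax⟩ := exists_max_image univ.offDiag (fun p => v p.1 ⬝ᵥ v p.2)
      ⟨(i₀, j₀), by simpa using hij₀⟩
    have hn : (0 : ℝ) < n := by exact_mod_cast i.pos
    refine ⟨i, le_trans ?_ (one_div_le_attentionEntry hv0 hv1 ht1 (by simpa using hij)
      (ht₀.trans (hmax (i₀, j₀) (by simpa using hij₀))) fun k hk => hmax (i, k) (by simpa))⟩
    gcongr
    linarith
  · intro hno
    have hle : ∀ i, attentionEntry n t v i ≤ ℓ / (n : ℝ) ^ 2 :=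
      fun i => attentionEntry_le hv0 hv1 i (hno i)
    refine ⟨hle, fun hℓn i => (hle i).trans_lt ?_⟩
    have hn : (0 : ℝ) < n := by exact_mod_cast i.pos
    rw [div_lt_div_iff₀ (by positivity) (by positivity)]
    linarith

/-- The yes/no gap of the attention entries in the construction showing a single
attention unit with input and output MLPs solves `Max-IP_{n,ℓ,t}`. -/
theorem stmt8 (n ℓ t : ℕ) (hn : 2 ≤ n) (hℓ : 1 ≤ ℓ) (ht1 : 1 ≤ t) (ht2 : t ≤ ℓ)
    (v : Fin n → Fin ℓ → ℝ)
    (hbin : ∀ i s, v i s = 0 ∨ v i s = 1)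
    (A : Fin n → ℝ)
    (hA : ∀ i, A i =
      (∑ j ∈ Finset.univ.erase i,
          (n : ℝ) ^ (3 * ((∑ s, v i s * v j s) + 1)) * (∑ s, v j s)) /
        ((∑ k ∈ Finset.univ.erase i, (n : ℝ) ^ (3 * ((∑ s, v i s * v k s) + 1))) +
          (n : ℝ) ^ (3 * ((t : ℝ) + 1)))) :
    ((∃ i j : Fin n, i ≠ j ∧ (t : ℝ) ≤ ∑ s, v i s * v j s) →
      ∃ i, 1 / ((n : ℝ) + 1) ≤ A i) ∧
    ((∀ i j : Fin n, i ≠ j → (∑ s, v i s * v j s) ≤ (t : ℝ) - 1) →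
      (∀ i, A i ≤ (ℓ : ℝ) / (n : ℝ) ^ 2) ∧
      ((ℓ : ℝ) * ((n : ℝ) + 1) ^ (1.5 : ℝ) < (n : ℝ) ^ 2 →
        ∀ i, A i < 1 / ((n : ℝ) + 1) ^ (1.5 : ℝ))) :=
  stmt8_general n ℓ t ht1 v hbin A hA
end

section
/- Let n ≥ 2, ℓ ≥ 1, let t be an integer with 1 ≤ t ≤ ℓ, and let v₁,…,vₙ : Fin ℓ → ℝ be nonzero binary vectors. For each i define Aᵢ = (∑_{j ≠ i} n^{−3(⟨vᵢ,vⱼ⟩+1)} · (∑_t vⱼ t)) / (∑_{k ≠ i} n^{−3(⟨vᵢ,vₖ⟩+1)} + n^{−3(t+1)}), where n^x denotes the real power of n. Then: (a) if there exist i ≠ j with ⟨vᵢ, vⱼ⟩ ≤ t, there exists i with Aᵢ ≥ 1/(n+1); and (b) if ⟨vᵢ, vⱼ⟩ ≥ t + 1 for all i ≠ j, then Aᵢ ≤ ℓ/n² for every i. -/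
/-!
Fix a row `i` and write `w k = n^(-3(⟨vᵢ,vₖ⟩+1))`, `m k = ∑ vₖ ∈ [1, ℓ]` and `e = n^(-3(t+1))`
for the end-token weight, so `Aᵢ = (∑ w k m k) / (∑ w k + e)`. The numerator dominates `∑ w k`
because every `m k ≥ 1`; if some `⟨vᵢ,vⱼ⟩ ≤ t` it also dominates `w j ≥ e`, so `Aᵢ ≥ 1/2`.
If instead all inner products are `≥ t + 1`, every `w k ≤ n^(-3(t+2))`, and the at most `n`
terms of the numerator sum to at most `n · n^(-3(t+2)) · ℓ = e · ℓ / n²`, so `Aᵢ ≤ ℓ / n²`.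
-/

open Finset

lemma nonneg_of_eq_zero_or_eq_one {x : ℝ} (hx : x = 0 ∨ x = 1) : 0 ≤ x := by
  rcases hx with h | h <;> simp [h]

section BinaryVector

variable {ι : Type*} [Fintype ι] {v : ι → ℝ}

lemma sum_le_card_of_binary (hv : ∀ s, v s = 0 ∨ v s = 1) : ∑ s, v s ≤ Fintype.card ι := by
  calc ∑ s, v s ≤ ∑ _s : ι, (1 : ℝ) :=
        sum_le_sum fun s _ => by rcases hv s with h | h <;> simp [h]
    _ = Fintype.card ι := by simp

lemma one_le_sum_of_binary (hv : ∀ s, v s = 0 ∨ v s = 1) (hne : v ≠ 0) : 1 ≤ ∑ s, v s := by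
  obtain ⟨s₀, hs₀⟩ := Function.ne_iff.mp hne
  calc (1 : ℝ) = v s₀ := ((hv s₀).resolve_left hs₀).symm
    _ ≤ ∑ s, v s := single_le_sum (fun s _ => nonneg_of_eq_zero_or_eq_one (hv s)) (mem_univ s₀)

end BinaryVector

section WeightedAverage

variable {ι : Type*} {s : Finset ι} {w m : ι → ℝ} {e : ℝ}

lemma one_half_le_weighted_sum_div (hw : ∀ k ∈ s, 0 ≤ w k) (hm : ∀ k ∈ s, 1 ≤ m k)
    {j : ι} (hj : j ∈ s) (he : 0 < e) (hej : e ≤ w j) :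
    1 / 2 ≤ (∑ k ∈ s, w k * m k) / (∑ k ∈ s, w k + e) := by
  have hterm : ∀ k ∈ s, w k ≤ w k * m k := fun k hk => le_mul_of_one_le_right (hw k hk) (hm k hk)
  have hsum : ∑ k ∈ s, w k ≤ ∑ k ∈ s, w k * m k := sum_le_sum hterm
  have hend : e ≤ ∑ k ∈ s, w k * m k :=
    calc e ≤ w j * m j := hej.trans (hterm j hj)
      _ ≤ ∑ k ∈ s, w k * m k :=
        single_le_sum (fun k hk => (hw k hk).trans (hterm k hk)) hj
  rw [le_div_iff₀ (by linarith [sum_nonneg hw])]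
  linarith

lemma weighted_sum_div_le (hw : ∀ k ∈ s, 0 ≤ w k) (hm : ∀ k ∈ s, 0 ≤ m k) (he : 0 < e)
    {b M : ℝ} (hwb : ∀ k ∈ s, w k ≤ b) (hmM : ∀ k ∈ s, m k ≤ M) :
    (∑ k ∈ s, w k * m k) / (∑ k ∈ s, w k + e) ≤ #s * (b * M) / e := by
  have hN : ∑ k ∈ s, w k * m k ≤ #s * (b * M) := by
    simpa using sum_le_sum fun k hk =>
      mul_le_mul (hwb k hk) (hmM k hk) (hm k hk) ((hw k hk).trans (hwb k hk))
  calc (∑ k ∈ s, w k * m k) / (∑ k ∈ s, w k + e)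
      ≤ (∑ k ∈ s, w k * m k) / e :=
        div_le_div_of_nonneg_left (sum_nonneg fun k hk => mul_nonneg (hw k hk) (hm k hk)) he
          (le_add_of_nonneg_left (sum_nonneg hw))
    _ ≤ #s * (b * M) / e := div_le_div_of_nonneg_right hN he.le

end WeightedAverage

lemma Real.mul_rpow_div_rpow_eq_div_sq {x : ℝ} (hx : 0 < x) (a M : ℝ) :
    x * (x ^ (-(3 * (a + 2))) * M) / x ^ (-(3 * (a + 1))) = M / x ^ 2 := by
  have hsplit : x ^ (-(3 * (a + 2))) = x ^ (-(3 * (a + 1))) * (x ^ 3)⁻¹ := by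
    rw [← Real.rpow_natCast, ← Real.rpow_neg hx.le, ← Real.rpow_add hx]
    congr 1
    push_cast
    ring
  rw [hsplit]
  field_simp

theorem stmt9_general (n ℓ t : ℕ) (hn : 2 ≤ n)
    (v : Fin n → Fin ℓ → ℝ)
    (hbin : ∀ i s, v i s = 0 ∨ v i s = 1)
    (hnz : ∀ i, v i ≠ 0)
    (A : Fin n → ℝ)
    (hA : ∀ i, A i =
      (∑ j ∈ Finset.univ.erase i,
          (n : ℝ) ^ (-(3 * ((∑ s, v i s * v j s) + 1))) * (∑ s, v j s)) /
        ((∑ k ∈ Finset.univ.erase i, (n : ℝ) ^ (-(3 * ((∑ s, v i s * v k s) + 1)))) +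
          (n : ℝ) ^ (-(3 * ((t : ℝ) + 1))))) :
    ((∃ i j : Fin n, i ≠ j ∧ (∑ s, v i s * v j s) ≤ (t : ℝ)) →
      ∃ i, 1 / ((n : ℝ) + 1) ≤ A i) ∧
    ((∀ i j : Fin n, i ≠ j → (t : ℝ) + 1 ≤ ∑ s, v i s * v j s) →
      ∀ i, A i ≤ (ℓ : ℝ) / (n : ℝ) ^ 2) := by
  have hn1 : (1 : ℝ) < n := by exact_mod_cast hn
  have hn0 : (0 : ℝ) < n := by linarith
  have hw : ∀ x : ℝ, 0 < (n : ℝ) ^ x := Real.rpow_pos_of_pos hn0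
  constructor
  · rintro ⟨i, j, hij, hle⟩
    refine ⟨i, ?_⟩
    rw [hA i]
    calc 1 / ((n : ℝ) + 1) ≤ 1 / 2 := by gcongr; linarith
      _ ≤ _ := one_half_le_weighted_sum_div (fun k _ => (hw _).le)
          (fun k _ => one_le_sum_of_binary (hbin k) (hnz k))
          (mem_erase.mpr ⟨hij.symm, mem_univ j⟩)
          (hw _) ((Real.rpow_le_rpow_left_iff hn1).mpr (by linarith))
  · intro hfar i
    rw [hA i]
    set e : ℝ := (n : ℝ) ^ (-(3 * ((t : ℝ) + 1)))
    set b : ℝ := (n : ℝ) ^ (-(3 * ((t : ℝ) + 2)))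
    calc _ ≤ #(univ.erase i) * (b * ℓ) / e :=
          weighted_sum_div_le (fun k _ => (hw _).le)
            (fun k _ => sum_nonneg fun s _ => nonneg_of_eq_zero_or_eq_one (hbin k s)) (hw _)
            (fun k hk => (Real.rpow_le_rpow_left_iff hn1).mpr
              (by linarith [hfar i k (ne_of_mem_erase hk).symm]))
            (fun k _ => by simpa using sum_le_card_of_binary (hbin k))
      _ ≤ n * (b * ℓ) / e := by
          gcongr
          simp
      _ = ℓ / (n : ℝ) ^ 2 := Real.mul_rpow_div_rpow_eq_div_sq hn0 _ _

/-- The yes/no gap of the attention entries in the construction showing a single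
attention unit with input and output MLPs solves `Min-IP_{n,ℓ,t}`. -/
theorem stmt9 (n ℓ t : ℕ) (hn : 2 ≤ n) (hℓ : 1 ≤ ℓ) (ht1 : 1 ≤ t) (ht2 : t ≤ ℓ)
    (v : Fin n → Fin ℓ → ℝ)
    (hbin : ∀ i s, v i s = 0 ∨ v i s = 1)
    (hnz : ∀ i, v i ≠ 0)
    (A : Fin n → ℝ)
    (hA : ∀ i, A i =
      (∑ j ∈ Finset.univ.erase i,
          (n : ℝ) ^ (-(3 * ((∑ s, v i s * v j s) + 1))) * (∑ s, v j s)) /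
        ((∑ k ∈ Finset.univ.erase i, (n : ℝ) ^ (-(3 * ((∑ s, v i s * v k s) + 1)))) +
          (n : ℝ) ^ (-(3 * ((t : ℝ) + 1))))) :
    ((∃ i j : Fin n, i ≠ j ∧ (∑ s, v i s * v j s) ≤ (t : ℝ)) →
      ∃ i, 1 / ((n : ℝ) + 1) ≤ A i) ∧
    ((∀ i j : Fin n, i ≠ j → (t : ℝ) + 1 ≤ ∑ s, v i s * v j s) →
      ∀ i, A i ≤ (ℓ : ℝ) / (n : ℝ) ^ 2) :=
  stmt9_general n ℓ t hn v hbin hnz A hA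
end

section
/- For every ℓ ≥ 1 there exists a function f : (Fin ℓ → ℝ) → (Fin (ℓ+1) → ℝ) that is continuous at every x ≠ 0 and satisfies: if x ≠ 0 and the last coordinate x(ℓ) ≤ 1, then f(x) = (x/‖x‖₁, 1), the ℓ1-normalization of x with the entry 1 appended; and if x ≠ 0 and x(ℓ) ≥ 2, then f(x) = (0, x/‖x‖₁), the ℓ1-normalization of x with the entry 0 prepended. Here ‖x‖₁ = ∑_t |x t|. -/
open Finset

/-! Both target rows are continuous functions of `x` away from `0`, because `‖x‖₁` is
continuous and nonzero there. Blend them with the weight `ramp (x(ℓ))`, the clamp of `x(ℓ) - 1`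
to `[0, 1]`: it is continuous, vanishes for `x(ℓ) ≤ 1` and equals `1` for `x(ℓ) ≥ 2`. -/

section L1Normalize

variable {ι : Type*} [Fintype ι]

noncomputable def l1Normalize (x : ι → ℝ) : ι → ℝ := fun s => x s / ∑ s', |x s'|

lemma sum_abs_ne_zero {x : ι → ℝ} (hx : x ≠ 0) : ∑ s, |x s| ≠ 0 := by
  contrapose! hx
  ext s
  simpa using (sum_eq_zero_iff_of_nonneg fun s _ => abs_nonneg (x s)).1 hx s (mem_univ s)

lemma continuousAt_l1Normalize {x : ι → ℝ} (hx : x ≠ 0) : ContinuousAt l1Normalize x :=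
  continuousAt_pi.2 fun s => (continuous_apply s).continuousAt.div
    (continuous_finsetSum _ fun s' _ => (continuous_apply s').abs).continuousAt (sum_abs_ne_zero hx)

end L1Normalize

noncomputable def ramp (t : ℝ) : ℝ := Set.projIcc (0 : ℝ) 1 zero_le_one (t - 1)

lemma continuous_ramp : Continuous ramp :=
  continuous_subtype_val.comp (continuous_projIcc.comp (continuous_sub_right 1))

lemma ramp_of_le_one {t : ℝ} (ht : t ≤ 1) : ramp t = 0 := by
  simp [ramp, Set.projIcc_of_le_left _ (sub_nonpos.2 ht)]

lemma ramp_of_two_le {t : ℝ} (ht : 2 ≤ t) : ramp t = 1 := by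
  simp [ramp, Set.projIcc_of_right_le _ (by linarith : (1 : ℝ) ≤ t - 1)]

section InputMLP

variable {ℓ : ℕ} (L : Fin ℓ)

noncomputable def inputMLP (x : Fin ℓ → ℝ) : Fin (ℓ + 1) → ℝ :=
  (1 - ramp (x L)) • Fin.snoc (l1Normalize x) 1 + ramp (x L) • Fin.cons 0 (l1Normalize x)

lemma continuousAt_inputMLP {x : Fin ℓ → ℝ} (hx : x ≠ 0) : ContinuousAt (inputMLP L) x := by
  have hweight : ContinuousAt (fun y : Fin ℓ → ℝ => ramp (y L)) x :=
    (continuous_ramp.comp (continuous_apply L)).continuousAt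
  have hnorm := continuousAt_l1Normalize hx
  exact ((continuousAt_const.sub hweight).smul (hnorm.finSnoc continuousAt_const)).add
    (hweight.smul (continuousAt_const.finCons hnorm))

lemma inputMLP_of_le_one {x : Fin ℓ → ℝ} (hx : x L ≤ 1) :
    inputMLP L x = Fin.snoc (l1Normalize x) 1 := by
  simp [inputMLP, ramp_of_le_one hx]

lemma inputMLP_of_two_le {x : Fin ℓ → ℝ} (hx : 2 ≤ x L) :
    inputMLP L x = Fin.cons 0 (l1Normalize x) := by
  simp [inputMLP, ramp_of_two_le hx]

end InputMLP

/-- The 'input MLP' construction used for the MSD/LSD transformer: nonzero rows with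
last coordinate at most 1 get ℓ1-normalized with a constant 1 appended, while nonzero
rows with last coordinate at least 2 get ℓ1-normalized with a 0 prepended; the map is
continuous at every nonzero point. -/
theorem stmt14 (ℓ : ℕ) (hℓ : 1 ≤ ℓ) :
    ∃ f : (Fin ℓ → ℝ) → (Fin (ℓ + 1) → ℝ),
      (∀ x : Fin ℓ → ℝ, x ≠ 0 → ContinuousAt f x) ∧
      (∀ x : Fin ℓ → ℝ, x ≠ 0 → x ⟨ℓ - 1, by omega⟩ ≤ 1 →
        f x = Fin.snoc (fun s => x s / ∑ s', |x s'|) 1) ∧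
      (∀ x : Fin ℓ → ℝ, x ≠ 0 → 2 ≤ x ⟨ℓ - 1, by omega⟩ →
        f x = Fin.cons 0 (fun s => x s / ∑ s', |x s'|)) :=
  ⟨inputMLP ⟨ℓ - 1, by omega⟩, fun _ hx => continuousAt_inputMLP _ hx,
    fun _ _ hx => inputMLP_of_le_one _ hx, fun _ _ hx => inputMLP_of_two_le _ hx⟩
end
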